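/- Suppose the field K is algebraically closed, and let ℜ ⊆ F(𝒜). Then the vanishing ideal of the set V(J(ℜ)) ∩ (K^*)^n equals J(ℜ) : x_[n] = I(ℜ); equivalently, the affine variety V(I(ℜ)) is the Zariski closure of V(J(ℜ)) ∩ (K^*)^n in K^n. -/

import Mathlib

open MvPolynomial

noncomputable section

variable {K : Type*} [Field K] {n : ℕ}

open Classical in
/-- The support `supp(a) = {i : aᵢ ≠ 0}` of the linear form `∑ᵢ aᵢ xᵢ ∈ S₁`,
where linear forms of `S = K[x₁,…,xₙ]` are identified with their coefficient
vectors `a : Fin n → K`. -/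
def lsupp (a : Fin n → K) : Finset (Fin n) :=
  Finset.univ.filter (fun i => a i ≠ 0)

/-- `ι(r) = ∑_{i ∈ supp r} aᵢ · x_{supp(r) ∖ {i}}` for the linear form `r = ∑ᵢ aᵢ xᵢ`. -/
def iotaL (a : Fin n → K) : MvPolynomial (Fin n) K :=
  ∑ i ∈ lsupp a, C (a i) * ∏ j ∈ (lsupp a).erase i, X j

/-- `x_[n] = x₁⋯xₙ`. -/
def xAll (n : ℕ) (K : Type*) [Field K] : MvPolynomial (Fin n) K := ∏ i, X i

/-- `a : Fin n → K` (identified with the linear form `∑ᵢ aᵢ xᵢ ∈ S₁`) is a relation of the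
central arrangement whose hyperplanes are the kernels of the linear forms `α i`, i.e. it lies
in the kernel of the map `S₁ → V*`, `xᵢ ↦ αᵢ`. -/
def IsRel {V : Type*} [AddCommGroup V] [Module K V]
    (α : Fin n → Module.Dual K V) (a : Fin n → K) : Prop :=
  ∑ i, a i • α i = 0

/-- `J(ℜ) = (ι(r) : r ∈ ℜ)`. -/
def Jid (R : Set (Fin n → K)) : Ideal (MvPolynomial (Fin n) K) :=
  Ideal.span (iotaL '' R)

/-- `I(ℜ) = (ι(r) : r ∈ K·ℜ)`. -/
def Iid (R : Set (Fin n → K)) : Ideal (MvPolynomial (Fin n) K) :=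
  Ideal.span (iotaL '' (Submodule.span K R : Set (Fin n → K)))

/-- The Orlik–Terao ideal `I(𝒜) = (ι(r) : r ∈ F(𝒜))`. -/
def OTid {V : Type*} [AddCommGroup V] [Module K V]
    (α : Fin n → Module.Dual K V) : Ideal (MvPolynomial (Fin n) K) :=
  Ideal.span (iotaL '' {a | IsRel α a})

/-- The codimension (height) of an ideal `I`: the infimum of the heights, in the prime
spectrum, of the prime ideals containing `I`. -/
def codim {R : Type*} [CommRing R] (I : Ideal R) : ℕ∞ :=
  ⨅ p ∈ {p : PrimeSpectrum R | I ≤ p.asIdeal}, Order.height p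

/-!
Put `U = K·ℜ` and `W = U^⊥`. For `u ∈ U` the polynomial `x_{[n]∖supp u} ι(u) = x_[n] ∑ uᵢ/xᵢ`
is linear in `u`, so `x_[n] ι(u) ∈ J(ℜ)`; hence `I(ℜ) ⊆ J(ℜ) : x_[n]`, and the colon ideal
vanishes on `V(J(ℜ)) ∩ (K^*)ⁿ`, a set containing the reciprocal points `w⁻¹`, `w ∈ W ∩ (K^*)ⁿ`.
Conversely, modulo `I(ℜ)` every polynomial is a combination of nbc monomials (straighten along
broken circuits), and nbc monomials are linearly independent as functions on the reciprocal
points. Reflecting exponents turns the latter into a statement about polynomials on the linear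
space `W`, proved by induction on `n`, deleting or contracting the first hyperplane.
-/

open Matrix

def dotPerp (U : Submodule K (Fin n → K)) : Submodule K (Fin n → K) where
  carrier := {w | ∀ u ∈ U, u ⬝ᵥ w = 0}
  add_mem' hv hw u hu := by rw [dotProduct_add, hv u hu, hw u hu, add_zero]
  zero_mem' u _ := dotProduct_zero u
  smul_mem' c w hw u hu := by rw [dotProduct_smul, hw u hu, smul_zero]

lemma dotPerp_anti {U U' : Submodule K (Fin n → K)} (h : U ≤ U') : dotPerp U' ≤ dotPerp U :=
  fun _ hw u hu => hw u (h hu)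

lemma exists_mem_dotPerp_dotProduct_ne_zero {U : Submodule K (Fin n → K)} {v : Fin n → K}
    (hv : v ∉ U) : ∃ w ∈ dotPerp U, v ⬝ᵥ w ≠ 0 := by
  obtain ⟨f, hfv, hfU⟩ := U.exists_dual_map_eq_bot_of_notMem hv inferInstance
  have hf (x : Fin n → K) : x ⬝ᵥ (dotProductEquiv K (Fin n)).symm f = f x := by
    rw [dotProduct_comm]
    exact congr($((dotProductEquiv K (Fin n)).apply_symm_apply f) x)
  refine ⟨_, fun u hu => ?_, by rwa [hf]⟩
  rw [hf]
  simpa [hfU] using Submodule.mem_map_of_mem (f := f) hu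

/-- The relation space of the arrangement with the hyperplane `0` deleted. -/
def deleteZero (U : Submodule K (Fin (n + 1) → K)) : Submodule K (Fin n → K) :=
  U.comap (LinearMap.vecCons 0 LinearMap.id)

/-- The relation space of the restriction of the arrangement to the hyperplane `0`. -/
def contractZero (U : Submodule K (Fin (n + 1) → K)) : Submodule K (Fin n → K) :=
  U.map (LinearMap.funLeft K K Fin.succ)

lemma mem_deleteZero {U : Submodule K (Fin (n + 1) → K)} {v : Fin n → K} :
    v ∈ deleteZero U ↔ Fin.cons 0 v ∈ U := Iff.rfl

lemma tail_mem_deleteZero {U : Submodule K (Fin (n + 1) → K)} {u : Fin (n + 1) → K}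
    (hu : u ∈ U) (hu0 : u 0 = 0) : Fin.tail u ∈ deleteZero U := by
  rwa [mem_deleteZero, ← hu0, Fin.cons_self_tail]

lemma tail_mem_contractZero {U : Submodule K (Fin (n + 1) → K)} {u : Fin (n + 1) → K}
    (hu : u ∈ U) : Fin.tail u ∈ contractZero U :=
  ⟨u, hu, rfl⟩

lemma deleteZero_le_contractZero (U : Submodule K (Fin (n + 1) → K)) :
    deleteZero U ≤ contractZero U := fun v hv => by
  simpa using tail_mem_contractZero (mem_deleteZero.mp hv)

lemma cons_mem_dotPerp_of_forall_eq_zero {U : Submodule K (Fin (n + 1) → K)}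
    (hU : ∀ u ∈ U, u 0 = 0) (t : K) {w : Fin n → K} (hw : w ∈ dotPerp (deleteZero U)) :
    Fin.cons t w ∈ dotPerp U := fun u hu => by
  rw [← Fin.cons_self_tail u]
  change vecCons (u 0) (Fin.tail u) ⬝ᵥ vecCons t w = 0
  rw [cons_dotProduct_cons, hU u hu, zero_mul, zero_add]
  exact hw _ (tail_mem_deleteZero hu (hU u hu))

lemma cons_mem_dotPerp {U : Submodule K (Fin (n + 1) → K)} {u₀ : Fin (n + 1) → K}
    (hu₀ : u₀ ∈ U) (hu₀0 : u₀ 0 = 1) {w : Fin n → K} (hw : w ∈ dotPerp (deleteZero U)) :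
    Fin.cons (-(Fin.tail u₀ ⬝ᵥ w)) w ∈ dotPerp U := fun u hu => by
  have hz : Fin.tail (u - u 0 • u₀) ⬝ᵥ w = 0 :=
    hw _ (tail_mem_deleteZero (sub_mem hu (U.smul_mem _ hu₀)) (by simp [hu₀0]))
  have htail : Fin.tail u = Fin.tail (u - u 0 • u₀) + u 0 • Fin.tail u₀ := by
    ext; simp [Fin.tail]
  rw [← Fin.cons_self_tail u]
  change vecCons (u 0) (Fin.tail u) ⬝ᵥ vecCons _ w = 0
  rw [cons_dotProduct_cons, htail, add_dotProduct, hz, smul_dotProduct,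
    smul_eq_mul]
  ring

/-- `x^a` is an nbc monomial: no `u ∈ U` has its whole support except the largest index inside
`supp a`, i.e. `supp a` contains no broken circuit. -/
def IsNBC (U : Submodule K (Fin n → K)) (a : Fin n →₀ ℕ) : Prop :=
  ∀ u ∈ U, u ≠ 0 → ∃ i j, i < j ∧ u i ≠ 0 ∧ u j ≠ 0 ∧ a i = 0

lemma not_isNBC_of_single_mem {U : Submodule K (Fin n → K)} {i : Fin n}
    (hi : Pi.single i 1 ∈ U) (a : Fin n →₀ ℕ) : ¬ IsNBC U a := fun ha => by
  obtain ⟨k, j, hkj, hk, hj, -⟩ := ha _ hi (by simp)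
  rw [Pi.single_apply] at hk hj
  grind

lemma IsNBC.deleteZero {U : Submodule K (Fin (n + 1) → K)} {k : ℕ} {a : Fin n →₀ ℕ}
    (ha : IsNBC U (a.cons k)) : IsNBC (deleteZero U) a := fun v hv hv0 => by
  obtain ⟨i, j, hij, hi, hj, hai⟩ := ha _ hv (by simpa using hv0)
  obtain ⟨i, rfl⟩ := Fin.exists_succ_eq.mpr (show i ≠ 0 by rintro rfl; simp at hi)
  obtain ⟨j, rfl⟩ := Fin.exists_succ_eq.mpr (show j ≠ 0 by rintro rfl; simp at hj)
  exact ⟨i, j, by simpa using hij, by simpa using hi, by simpa using hj, by simpa using hai⟩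

lemma IsNBC.contractZero {U : Submodule K (Fin (n + 1) → K)} {k : ℕ} {a : Fin n →₀ ℕ}
    (ha : IsNBC U (a.cons k)) (hk : k ≠ 0) : IsNBC (contractZero U) a := by
  rintro _ ⟨u, hu, rfl⟩ hv0
  obtain ⟨i, j, hij, hi, hj, hai⟩ := ha u hu (fun h => hv0 (by simp [h]))
  obtain ⟨i, rfl⟩ :=
    Fin.exists_succ_eq.mpr (show i ≠ 0 by rintro rfl; exact hk (by simpa using hai))
  obtain ⟨j, rfl⟩ := Fin.exists_succ_eq.mpr (show j ≠ 0 by rintro rfl; simp at hij)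
  exact ⟨i, j, by simpa using hij, hi, hj, by simpa using hai⟩

lemma eval_eq_zero_of_eval_mul_eq_zero [Infinite K] {W : Submodule K (Fin n → K)}
    {F G : MvPolynomial (Fin n) K} {v : Fin n → K} (hv : v ∈ W) (hGv : eval v G ≠ 0)
    (hFG : ∀ w ∈ W, eval w F * eval w G = 0) {w : Fin n → K} (hw : w ∈ W) : eval w F = 0 := by
  -- restrict to the line through `w` and `v`, on which `G` is a nonzero polynomial
  set line : Fin n → Polynomial K := fun i => .C (w i) + .C (v i - w i) * .X
  have heval (H : MvPolynomial (Fin n) K) (t : K) :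
      (aeval line H).eval t = eval (w + t • (v - w)) H := by
    rw [aeval_def, polynomial_eval_eval₂]
    congr 1
    · ext; simp
    · ext i; simp [line, mul_comm]
  have hprod : aeval line F * aeval line G = 0 := Polynomial.funext fun t => by
    rw [Polynomial.eval_mul, heval, heval, Polynomial.eval_zero]
    exact hFG _ (W.add_mem hw (W.smul_mem t (W.sub_mem hv hw)))
  have hG : aeval line G ≠ 0 := fun h => hGv (by simpa [heval] using congr(Polynomial.eval 1 $h))
  simpa [heval] using congr(Polynomial.eval 0 $((mul_eq_zero.mp hprod).resolve_right hG))

def IsReflectedNBC (U : Submodule K (Fin n → K)) (b : Fin n →₀ ℕ)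
    (p : MvPolynomial (Fin n) K) : Prop :=
  ∀ m ∈ p.support, m ≤ b ∧ IsNBC U (b - m)

lemma IsReflectedNBC.coeff_finSuccEquiv {U : Submodule K (Fin (n + 1) → K)}
    {U' : Submodule K (Fin n → K)} {b : Fin (n + 1) →₀ ℕ} {p : MvPolynomial (Fin (n + 1)) K}
    (hp : IsReflectedNBC U b p) (j : ℕ)
    (hU : ∀ a, IsNBC U (a.cons (b 0 - j)) → IsNBC U' a) :
    IsReflectedNBC U' b.tail ((finSuccEquiv K n p).coeff j) := fun m hm => by
  obtain ⟨hle, hnbc⟩ := hp _ (mem_support_coeff_finSuccEquiv.mp hm)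
  have hsub : b - m.cons j = (b.tail - m).cons (b 0 - j) := by
    ext i
    refine Fin.cases ?_ (fun i => ?_) i <;> simp [Finsupp.tail_apply]
  exact ⟨fun i => by simpa [Finsupp.tail_apply] using hle i.succ, hU _ (hsub ▸ hnbc)⟩

lemma IsReflectedNBC.natDegree_finSuccEquiv_le {U : Submodule K (Fin (n + 1) → K)}
    {b : Fin (n + 1) →₀ ℕ} {p : MvPolynomial (Fin (n + 1)) K} (hp : IsReflectedNBC U b p) :
    (finSuccEquiv K n p).natDegree ≤ b 0 := by
  rw [natDegree_finSuccEquiv, degreeOf_le_iff]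
  exact fun m hm => (hp m hm).1 0

/-- Independence of the nbc monomials on the reciprocal points `w⁻¹`, `w ∈ dotPerp U`, after
reflecting exponents through `b`, which turns these points into the linear space `dotPerp U`. -/
def NBCIndependent (K : Type*) [Field K] (n : ℕ) : Prop :=
  ∀ (U : Submodule K (Fin n → K)) b (p : MvPolynomial (Fin n) K),
    IsReflectedNBC U b p → (∀ w ∈ dotPerp U, eval w p = 0) → p = 0

lemma nbcIndependent_zero [Infinite K] : NBCIndependent K 0 := fun U _ p _ hvan =>
  MvPolynomial.funext fun w => by simpa [Subsingleton.elim w 0] using hvan 0 (zero_mem _)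

lemma NBCIndependent.succ_of_forall_eq_zero [Infinite K] (ih : NBCIndependent K n)
    {U : Submodule K (Fin (n + 1) → K)} (hU : ∀ u ∈ U, u 0 = 0) {b : Fin (n + 1) →₀ ℕ}
    {p : MvPolynomial (Fin (n + 1)) K} (hp : IsReflectedNBC U b p)
    (hvan : ∀ w ∈ dotPerp U, eval w p = 0) : p = 0 := by
  have hcoeff (j : ℕ) (w : Fin n → K) (hw : w ∈ dotPerp (deleteZero U)) :
      eval w ((finSuccEquiv K n p).coeff j) = 0 := by
    have hmap : (finSuccEquiv K n p).map (eval w) = 0 := Polynomial.funext fun t => by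
      rw [← eval_eq_eval_mv_eval', Polynomial.eval_zero]
      exact hvan _ (cons_mem_dotPerp_of_forall_eq_zero hU t hw)
    simpa using congr(Polynomial.coeff $hmap j)
  have hP : finSuccEquiv K n p = 0 := Polynomial.ext fun j =>
    ih _ _ _ (hp.coeff_finSuccEquiv j fun _ ha => ha.deleteZero) (hcoeff j)
  simpa using hP

lemma tail_notMem_deleteZero {U : Submodule K (Fin (n + 1) → K)} {u₀ : Fin (n + 1) → K}
    (hu₀ : u₀ ∈ U) (hu₀0 : u₀ 0 = 1) (hsingle : Pi.single 0 1 ∉ U) :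
    Fin.tail u₀ ∉ deleteZero U := fun h => hsingle <| by
  convert sub_mem hu₀ (mem_deleteZero.mp h) using 1
  ext i
  refine Fin.cases ?_ (fun i => ?_) i <;> simp [hu₀0, Fin.tail]

lemma eval_trailingCoeff_eq_zero [Infinite K] {W : Submodule K (Fin n → K)}
    {P : Polynomial (MvPolynomial (Fin n) K)} {τ : MvPolynomial (Fin n) K} {v : Fin n → K}
    (hv : v ∈ W) (hτv : eval v τ ≠ 0) (hP : ∀ w ∈ W, eval w (P.eval τ) = 0)
    {w : Fin n → K} (hw : w ∈ W) (hτw : eval w τ = 0 ∨ P.natDegree ≤ P.natTrailingDegree) :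
    eval w P.trailingCoeff = 0 := by
  set j := P.natTrailingDegree
  obtain ⟨Q, hQ⟩ : Polynomial.X ^ j ∣ P := Polynomial.X_pow_dvd_iff.mpr fun _ hd =>
    Polynomial.coeff_eq_zero_of_lt_natTrailingDegree hd
  have hPQ : P.eval τ = τ ^ j * Q.eval τ := by
    rw [hQ, Polynomial.eval_mul, Polynomial.eval_pow, Polynomial.eval_X]
  have hQτ : eval w (Q.eval τ) = 0 := by
    refine eval_eq_zero_of_eval_mul_eq_zero (G := τ ^ j) hv
      (by rw [map_pow]; exact pow_ne_zero _ hτv) (fun w hw => ?_) hw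
    rw [← map_mul, mul_comm, ← hPQ]
    exact hP w hw
  have hPj : P.trailingCoeff = Q.coeff 0 := by
    have := Polynomial.coeff_X_pow_mul Q j 0
    rwa [zero_add, ← hQ] at this
  rw [hPj]
  rcases hτw with hτw | hdeg
  · rw [← hQτ, ← Polynomial.eval₂_at_apply, hτw, Polynomial.eval₂_at_zero]
  · rcases eq_or_ne Q 0 with rfl | hQ0
    · simp
    have hQC : Q = Polynomial.C (Q.coeff 0) := by
      refine Polynomial.eq_C_of_natDegree_eq_zero ?_
      rw [hQ, Polynomial.natDegree_X_pow_mul _ hQ0] at hdeg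
      omega
    rwa [hQC, Polynomial.eval_C] at hQτ

lemma NBCIndependent.succ_of_mem [Infinite K] (ih : NBCIndependent K n)
    {U : Submodule K (Fin (n + 1) → K)} {u₀ : Fin (n + 1) → K} (hu₀ : u₀ ∈ U) (hu₀0 : u₀ 0 = 1)
    {b : Fin (n + 1) →₀ ℕ} {p : MvPolynomial (Fin (n + 1)) K} (hp : IsReflectedNBC U b p)
    (hvan : ∀ w ∈ dotPerp U, eval w p = 0) : p = 0 := by
  by_cases hsingle : Pi.single 0 1 ∈ U
  · rw [← support_eq_empty, Finset.eq_empty_iff_forall_notMem]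
    exact fun m hm => not_isNBC_of_single_mem hsingle _ (hp m hm).2
  by_contra hp0
  set P := finSuccEquiv K n p
  have hP0 : P ≠ 0 := fun h => hp0 ((finSuccEquiv K n).injective (h.trans (map_zero _).symm))
  -- on `dotPerp U` the first coordinate is the linear form `τ` of the others
  set τ : MvPolynomial (Fin n) K := -∑ i, C (u₀ i.succ) * X i
  have hτ (w : Fin n → K) : eval w τ = -(Fin.tail u₀ ⬝ᵥ w) := by
    simp [τ, dotProduct, Fin.tail]
  have hPτ (w : Fin n → K) (hw : w ∈ dotPerp (deleteZero U)) : eval w (P.eval τ) = 0 := by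
    rw [eval_polynomial_eval_finSuccEquiv, hτ]
    exact hvan _ (cons_mem_dotPerp hu₀ hu₀0 hw)
  obtain ⟨v, hv, hτv⟩ :=
    exists_mem_dotPerp_dotProduct_ne_zero (tail_notMem_deleteZero hu₀ hu₀0 hsingle)
  replace hτv : eval v τ ≠ 0 := by rwa [hτ, neg_ne_zero]
  -- the lowest layer in `x₀` is the only one surviving where `τ` vanishes
  apply Polynomial.trailingCoeff_nonzero_iff_nonzero.mpr hP0
  rcases (P.natTrailingDegree_le_natDegree.trans hp.natDegree_finSuccEquiv_le).lt_or_eq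
    with hj | hj
  · refine ih (contractZero U) b.tail _
      (hp.coeff_finSuccEquiv _ fun _ ha => ha.contractZero (by omega)) fun w hw => ?_
    refine eval_trailingCoeff_eq_zero hv hτv hPτ
      (dotPerp_anti (deleteZero_le_contractZero U) hw) (.inl ?_)
    rw [hτ, hw _ (tail_mem_contractZero hu₀), neg_zero]
  · refine ih (deleteZero U) b.tail _
      (hp.coeff_finSuccEquiv _ fun _ ha => ha.deleteZero) fun w hw =>
        eval_trailingCoeff_eq_zero hv hτv hPτ hw (.inr ?_)
    rw [hj]
    exact hp.natDegree_finSuccEquiv_le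

theorem nbcIndependent [Infinite K] (n : ℕ) : NBCIndependent K n := by
  induction n with
  | zero => exact nbcIndependent_zero
  | succ n ih =>
    intro U b p hp hvan
    by_cases hU : ∀ u ∈ U, u 0 = 0
    · exact ih.succ_of_forall_eq_zero hU hp hvan
    push Not at hU
    obtain ⟨u, hu, hu0⟩ := hU
    exact ih.succ_of_mem (U.smul_mem (u 0)⁻¹ hu) (by simp [hu0]) hp hvan

lemma monomial_mul_iotaL (u : Fin n → K) (m : Fin n →₀ ℕ) :
    monomial m 1 * iotaL u = ∑ i ∈ lsupp u,
      C (u i) * monomial (m + ∑ k ∈ (lsupp u).erase i, Finsupp.single k 1) 1 := by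
  rw [iotaL, Finset.mul_sum]
  refine Finset.sum_congr rfl fun i _ => ?_
  simp only [X, ← monomial_sum_one]
  rw [mul_left_comm, monomial_mul, one_mul]

def exponentWeight : (Fin n →₀ ℕ) →+ ℕ := Finsupp.weight fun k => 2 ^ (k.rev : ℕ)

lemma exponentWeight_lt_of_add_single_eq {c a : Fin n →₀ ℕ} {i j : Fin n} (hij : i < j)
    (h : c + Finsupp.single i 1 = a + Finsupp.single j 1) :
    exponentWeight c < exponentWeight a := by
  have hw := congr(exponentWeight $h)
  simp only [exponentWeight, map_add, Finsupp.weight_single, one_smul] at hw ⊢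
  have : 2 ^ (j.rev : ℕ) < 2 ^ (i.rev : ℕ) :=
    Nat.pow_lt_pow_right one_lt_two (by simp only [Fin.val_rev]; omega)
  omega

lemma monomial_mem_span_iotaL_sup_restrictSupport (U : Submodule K (Fin n → K))
    (a : Fin n →₀ ℕ) :
    monomial a (1 : K) ∈ (Ideal.span (iotaL '' (U : Set (Fin n → K)))).restrictScalars K ⊔
      restrictSupport K {a | IsNBC U a} := by
  classical
  set M := (Ideal.span (iotaL '' (U : Set (Fin n → K)))).restrictScalars K ⊔
    restrictSupport K {a | IsNBC U a}
  induction hN : exponentWeight a using Nat.strong_induction_on generalizing a with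
  | _ N ih =>
  by_cases ha : IsNBC U a
  · refine Submodule.mem_sup_right ((mem_restrictSupport_iff K).mpr fun m hm => ?_)
    rwa [Finset.mem_singleton.mp (support_monomial_subset hm)]
  -- `supp a` contains a broken circuit `s ∖ {j}`; straighten `x^a` with the relation `u`
  simp only [IsNBC, not_forall, not_exists, not_and] at ha
  obtain ⟨u, hu, hu0, hbc⟩ := ha
  set s := lsupp u
  have hs : s.Nonempty := by
    obtain ⟨i, hi⟩ := Function.ne_iff.mp hu0
    exact ⟨i, by simpa [s, lsupp] using hi⟩
  set j := s.max' hs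
  have hj : j ∈ s := s.max'_mem hs
  have hlt (i : Fin n) (hi : i ∈ s.erase j) : i < j :=
    lt_of_le_of_ne (s.le_max' i (Finset.mem_of_mem_erase hi)) (Finset.ne_of_mem_erase hi)
  have hsupp {i : Fin n} (hi : i ∈ s) : u i ≠ 0 := by simpa [s, lsupp] using hi
  set χ : Finset (Fin n) → Fin n →₀ ℕ := fun t => ∑ k ∈ t, Finsupp.single k 1
  obtain ⟨m, hm⟩ : ∃ m, a = m + χ (s.erase j) := le_iff_exists_add'.mp fun k => by
    by_cases hk : k ∈ s.erase j
    · simpa [χ, Finsupp.finsetSum_apply, Finsupp.single_apply, hk, Nat.one_le_iff_ne_zero] using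
        hbc k j (hlt k hk) (hsupp (Finset.mem_of_mem_erase hk)) (hsupp hj)
    · simp [χ, Finsupp.finsetSum_apply, Finsupp.single_apply, hk]
  have hexp (i : Fin n) (hi : i ∈ s) :
      m + χ (s.erase i) + Finsupp.single i 1 = a + Finsupp.single j 1 := by
    rw [add_assoc, Finset.sum_erase_add _ _ hi, hm, add_assoc, Finset.sum_erase_add _ _ hj]
  have hsplit : C (u j) * monomial a 1 = monomial m 1 * iotaL u -
      ∑ i ∈ s.erase j, C (u i) * monomial (m + χ (s.erase i)) 1 := by
    rw [monomial_mul_iotaL, ← Finset.add_sum_erase _ _ hj, hm]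
    ring
  have hmem : C (u j) * monomial a 1 ∈ M := by
    rw [hsplit]
    refine sub_mem (Submodule.mem_sup_left (Ideal.mul_mem_left _ _
      (Ideal.subset_span ⟨u, hu, rfl⟩))) (sum_mem fun i hi => ?_)
    rw [← smul_eq_C_mul]
    refine M.smul_mem _ (ih _ ?_ _ rfl)
    exact hN ▸ exponentWeight_lt_of_add_single_eq (hlt i hi) (hexp i (Finset.mem_of_mem_erase hi))
  have hinv : monomial a (1 : K) = (u j)⁻¹ • (C (u j) * monomial a 1) := by
    rw [← smul_eq_C_mul, smul_smul, inv_mul_cancel₀ (hsupp hj), one_smul]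
  rw [hinv]
  exact M.smul_mem _ hmem

lemma exists_sub_mem_restrictSupport (U : Submodule K (Fin n → K))
    (f : MvPolynomial (Fin n) K) :
    ∃ g ∈ Ideal.span (iotaL '' (U : Set (Fin n → K))),
      f - g ∈ restrictSupport K {a | IsNBC U a} := by
  have hspan : Submodule.span K (Set.range fun a => monomial a (1 : K)) ≤
      (Ideal.span (iotaL '' (U : Set (Fin n → K)))).restrictScalars K ⊔
        restrictSupport K {a | IsNBC U a} :=
    Submodule.span_le.mpr (Set.range_subset_iff.mpr
      (monomial_mem_span_iotaL_sup_restrictSupport U))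
  obtain ⟨g, hg, h, hh, rfl⟩ := Submodule.mem_sup.mp
    (hspan (by simpa using (basisMonomials (Fin n) K).mem_span f))
  exact ⟨g, hg, by simpa using hh⟩

lemma eval_monomial_eq_prod (w : Fin n → K) (m : Fin n →₀ ℕ) (c : K) :
    eval w (monomial m c) = c * ∏ i, w i ^ m i := by
  rw [eval_monomial, Finsupp.prod_fintype _ _ fun i => pow_zero _]

def reflect (b : Fin n →₀ ℕ) (h : MvPolynomial (Fin n) K) : MvPolynomial (Fin n) K :=
  ∑ a ∈ h.support, monomial (b - a) (coeff a h)

section reflect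

variable {b : Fin n →₀ ℕ} {h : MvPolynomial (Fin n) K}

lemma isReflectedNBC_reflect {U : Submodule K (Fin n → K)} (hb : ∀ a ∈ h.support, a ≤ b)
    (hh : h ∈ restrictSupport K {a | IsNBC U a}) : IsReflectedNBC U b (reflect b h) :=
  fun m hm => by
    classical
    obtain ⟨a, ha, hm⟩ := Finset.mem_biUnion.mp (support_sum hm)
    rw [Finset.mem_singleton.mp (support_monomial_subset hm), tsub_tsub_cancel_of_le (hb a ha)]
    exact ⟨tsub_le_self, hh ha⟩

lemma eval_reflect (w : Fin n → K) :
    eval w (reflect b h) = ∑ a ∈ h.support, coeff a h * ∏ i, w i ^ (b i - a i) := by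
  simp only [reflect, map_sum, eval_monomial_eq_prod, Finsupp.tsub_apply]

lemma eval_reflect_of_forall_ne_zero (hb : ∀ a ∈ h.support, a ≤ b) {w : Fin n → K}
    (hw : ∀ i, w i ≠ 0) : eval w (reflect b h) = (∏ i, w i ^ b i) * eval w⁻¹ h := by
  rw [eval_reflect, eval_eq', Finset.mul_sum]
  refine Finset.sum_congr rfl fun a ha => ?_
  rw [mul_left_comm, ← Finset.prod_mul_distrib]
  congr 2 with i
  rw [pow_sub₀ _ (hw i) (hb a ha i), Pi.inv_apply, inv_pow]

lemma eval_reflect_of_eq_zero (hb : ∀ a ∈ h.support, ∀ i, a i < b i) {w : Fin n → K} {i : Fin n}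
    (hw : w i = 0) : eval w (reflect b h) = 0 := by
  rw [eval_reflect]
  refine Finset.sum_eq_zero fun a ha => ?_
  have hpos : b i - a i ≠ 0 := by have := hb a ha i; omega
  rw [Finset.prod_eq_zero (Finset.mem_univ i) (by rw [hw, zero_pow hpos]), mul_zero]

lemma coeff_tsub_reflect (hb : ∀ a ∈ h.support, a ≤ b) {a : Fin n →₀ ℕ} (ha : a ∈ h.support) :
    coeff (b - a) (reflect b h) = coeff a h := by
  classical
  rw [reflect, coeff_sum, Finset.sum_eq_single a (fun a' ha' hne => ?_) (absurd ha),
    coeff_monomial, if_pos rfl]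
  rw [coeff_monomial, if_neg fun heq => hne ((tsub_right_inj (hb a' ha') (hb a ha)).mp heq)]

end reflect

lemma eq_zero_of_forall_eval_inv_eq_zero [Infinite K] {U : Submodule K (Fin n → K)}
    {h : MvPolynomial (Fin n) K} (hh : h ∈ restrictSupport K {a | IsNBC U a})
    (hvan : ∀ w ∈ dotPerp U, (∀ i, w i ≠ 0) → eval w⁻¹ h = 0) : h = 0 := by
  -- reflect through an exponent `b` exceeding all exponents of `h`, so that the reflection
  -- vanishes wherever a coordinate does
  set b : Fin n →₀ ℕ := Finsupp.equivFunOnFinite.symm fun i => degreeOf i h + 1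
  have hb (a : Fin n →₀ ℕ) (ha : a ∈ h.support) (i : Fin n) : a i < b i := by
    simpa [b] using Nat.lt_succ_of_le (monomial_le_degreeOf i ha)
  have hab (a : Fin n →₀ ℕ) (ha : a ∈ h.support) : a ≤ b := fun i => (hb a ha i).le
  have hrefl : reflect b h = 0 := by
    refine nbcIndependent n U b _ (isReflectedNBC_reflect hab hh) fun w hw => ?_
    by_cases hw0 : ∀ i, w i ≠ 0
    · rw [eval_reflect_of_forall_ne_zero hab hw0, hvan w hw hw0, mul_zero]
    · push Not at hw0
      obtain ⟨i, hi⟩ := hw0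
      exact eval_reflect_of_eq_zero hb hi
  ext a
  by_cases ha : a ∈ h.support
  · simpa [hrefl] using (coeff_tsub_reflect hab ha).symm
  · simpa using ha

/-- `x_[n] · ∑ᵢ uᵢ/xᵢ`; unlike `ι(u)` it is linear in `u`. -/
def iotaUniv : (Fin n → K) →ₗ[K] MvPolynomial (Fin n) K :=
  Fintype.linearCombination K fun i => ∏ j ∈ Finset.univ.erase i, X j

lemma prod_compl_lsupp_mul_iotaL (u : Fin n → K) :
    (∏ j ∈ (lsupp u)ᶜ, X j) * iotaL u = iotaUniv u := by
  classical
  have hsub : ∀ i ∈ Finset.univ, i ∉ lsupp u →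
      u i • ∏ j ∈ Finset.univ.erase i, (X j : MvPolynomial (Fin n) K) = 0 :=
    fun i _ hi => by rw [show u i = 0 by simpa [lsupp] using hi, zero_smul]
  rw [iotaL, iotaUniv, Fintype.linearCombination_apply, Finset.mul_sum,
    ← Finset.sum_subset (Finset.subset_univ _) hsub]
  refine Finset.sum_congr rfl fun i hi => ?_
  have hcompl : (Finset.univ.erase i) \ ((lsupp u).erase i) = (lsupp u)ᶜ := by
    ext k
    by_cases hk : k = i <;> simp [hk, hi]
  rw [smul_eq_C_mul, mul_left_comm, ← hcompl,
    Finset.prod_sdiff (Finset.erase_subset_erase _ (Finset.subset_univ _))]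

lemma iotaUniv_mem_Jid {R : Set (Fin n → K)} {u : Fin n → K} (hu : u ∈ Submodule.span K R) :
    iotaUniv u ∈ Jid R := by
  refine (Submodule.map_span_le iotaUniv R ((Jid R).restrictScalars K)).mpr (fun r hr => ?_)
    ⟨u, hu, rfl⟩
  rw [← prod_compl_lsupp_mul_iotaL]
  exact Ideal.mul_mem_left _ _ (Ideal.subset_span ⟨r, hr, rfl⟩)

lemma Iid_le_colon (R : Set (Fin n → K)) :
    Iid R ≤ (Jid R).colon (Ideal.span {xAll n K}) := by
  classical
  refine Ideal.span_le.mpr ?_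
  rintro _ ⟨u, hu, rfl⟩
  rw [SetLike.mem_coe, Ideal.mem_colon_span_singleton, xAll,
    ← Finset.prod_mul_prod_compl (lsupp u), mul_comm, mul_assoc,
    prod_compl_lsupp_mul_iotaL]
  exact Ideal.mul_mem_left _ _ (iotaUniv_mem_Jid hu)

lemma eval_inv_iotaL_mul_prod (r w : Fin n → K) (hw : ∀ i, w i ≠ 0) :
    eval w⁻¹ (iotaL r) * ∏ j ∈ lsupp r, w j = r ⬝ᵥ w := by
  have hzero : ∀ i ∈ Finset.univ, i ∉ lsupp r → r i * w i = 0 :=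
    fun i _ hi => by rw [show r i = 0 by simpa [lsupp] using hi, zero_mul]
  rw [iotaL, map_sum, Finset.sum_mul, dotProduct,
    ← Finset.sum_subset (Finset.subset_univ _) hzero]
  refine Finset.sum_congr rfl fun i hi => ?_
  have hcancel : (∏ j ∈ (lsupp r).erase i, (w j)⁻¹) * ∏ j ∈ (lsupp r).erase i, w j = 1 := by
    rw [← Finset.prod_mul_distrib]
    exact Finset.prod_eq_one fun j _ => inv_mul_cancel₀ (hw j)
  simp only [map_mul, eval_C, map_prod, eval_X, Pi.inv_apply, ← Finset.mul_prod_erase _ _ hi]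
  linear_combination (r i * w i) * hcancel

lemma inv_mem_zeroLocus_Jid {R : Set (Fin n → K)} {w : Fin n → K}
    (hw : w ∈ dotPerp (Submodule.span K R)) (hw0 : ∀ i, w i ≠ 0) :
    w⁻¹ ∈ zeroLocus K (Jid R) := by
  have hker : Jid R ≤ RingHom.ker (eval w⁻¹) := by
    refine Ideal.span_le.mpr ?_
    rintro _ ⟨r, hr, rfl⟩
    have := eval_inv_iotaL_mul_prod r w hw0
    rw [hw r (Submodule.subset_span hr)] at this
    exact (mul_eq_zero.mp this).resolve_right (Finset.prod_ne_zero_iff.mpr fun j _ => hw0 j)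
  exact fun f hf => by simpa using hker hf

lemma colon_le_vanishingIdeal (R : Set (Fin n → K)) :
    (Jid R).colon (Ideal.span {xAll n K}) ≤
      vanishingIdeal K (zeroLocus K (Jid R) ∩ {p : Fin n → K | ∀ i, p i ≠ 0}) := by
  intro f hf
  rw [mem_vanishingIdeal_iff]
  rintro x ⟨hxJ, hx0⟩
  have hfx := hxJ _ (Ideal.mem_colon_span_singleton.mp hf)
  simp only [xAll, map_mul, map_prod, aeval_X] at hfx
  exact (mul_eq_zero.mp hfx).resolve_right (Finset.prod_ne_zero_iff.mpr fun i _ => hx0 i)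

lemma vanishingIdeal_le_Iid [Infinite K] (R : Set (Fin n → K)) :
    vanishingIdeal K (zeroLocus K (Jid R) ∩ {p : Fin n → K | ∀ i, p i ≠ 0}) ≤ Iid R := by
  intro f hf
  obtain ⟨g, hg, hfg⟩ := exists_sub_mem_restrictSupport (Submodule.span K R) f
  have hgA := colon_le_vanishingIdeal R (Iid_le_colon R hg)
  have hfg0 : f - g = 0 := eq_zero_of_forall_eval_inv_eq_zero hfg fun w hw hw0 => by
    simpa using (sub_mem hf hgA) _ ⟨inv_mem_zeroLocus_Jid hw hw0, fun i => inv_ne_zero (hw0 i)⟩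
  rwa [sub_eq_zero.mp hfg0]

theorem vanishingIdeal_zeroLocus_inter_torus_general
    [IsAlgClosed K]
    (R : Set (Fin n → K)) :
    MvPolynomial.vanishingIdeal K
        (MvPolynomial.zeroLocus K (Jid R) ∩ {p : Fin n → K | ∀ i, p i ≠ 0}) =
      (Jid R).colon (Ideal.span {xAll n K}) ∧
    MvPolynomial.vanishingIdeal K
        (MvPolynomial.zeroLocus K (Jid R) ∩ {p : Fin n → K | ∀ i, p i ≠ 0}) = Iid R ∧
    MvPolynomial.zeroLocus K (Iid R) =
      MvPolynomial.zeroLocus K (MvPolynomial.vanishingIdeal K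
        (MvPolynomial.zeroLocus K (Jid R) ∩ {p : Fin n → K | ∀ i, p i ≠ 0})) := by
  have hcolon := colon_le_vanishingIdeal R
  have hIcolon := Iid_le_colon R
  have hvan := vanishingIdeal_le_Iid R
  have hI : vanishingIdeal K (zeroLocus K (Jid R) ∩ {p : Fin n → K | ∀ i, p i ≠ 0}) = Iid R :=
    le_antisymm hvan (hIcolon.trans hcolon)
  exact ⟨le_antisymm (hvan.trans hIcolon) hcolon, hI, by rw [hI]⟩

/-- Remark 3.5: over an algebraically closed field, for `ℜ ⊆ F(𝒜)` the vanishing ideal of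
`V(J(ℜ)) ∩ (K*)ⁿ` equals `J(ℜ) : x_[n] = I(ℜ)`; equivalently, `V(I(ℜ))` is the Zariski
closure of `V(J(ℜ)) ∩ (K*)ⁿ` (its zero locus is that of the vanishing ideal of
`V(J(ℜ)) ∩ (K*)ⁿ`). -/
theorem vanishingIdeal_zeroLocus_inter_torus
    [IsAlgClosed K]
    {V : Type*} [AddCommGroup V] [Module K V] [FiniteDimensional K V]
    (α : Fin n → Module.Dual K V) (hne : ∀ i, α i ≠ 0)
    (hdist : ∀ i j, i ≠ j → LinearMap.ker (α i) ≠ LinearMap.ker (α j))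
    (R : Set (Fin n → K)) (hR : ∀ r ∈ R, IsRel α r) :
    MvPolynomial.vanishingIdeal K
        (MvPolynomial.zeroLocus K (Jid R) ∩ {p : Fin n → K | ∀ i, p i ≠ 0}) =
      (Jid R).colon (Ideal.span {xAll n K}) ∧
    MvPolynomial.vanishingIdeal K
        (MvPolynomial.zeroLocus K (Jid R) ∩ {p : Fin n → K | ∀ i, p i ≠ 0}) = Iid R ∧
    MvPolynomial.zeroLocus K (Iid R) =
      MvPolynomial.zeroLocus K (MvPolynomial.vanishingIdeal K
        (MvPolynomial.zeroLocus K (Jid R) ∩ {p : Fin n → K | ∀ i, p i ≠ 0})) :=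
  vanishingIdeal_zeroLocus_inter_torus_general R

end
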